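/- arXiv:2403.12843 — 2 statements merged into one kernel-verified Lean document; each statement's English description precedes it below -/
import Mathlib

section
/- Let s ∈ (0,1]. The function f : ℝ → ℝ defined by f(x) = exp(-x^s) satisfies: f is infinitely differentiable on (0,∞), and for every n ∈ ℕ and every x > 0, (-1)^n · f⁽ⁿ⁾(x) ≥ 0, where f⁽ⁿ⁾ denotes the n-th derivative of f. -/
open Real Set

private lemma cm_uniqueDiffOn : UniqueDiffOn ℝ (Set.Ioi (0:ℝ)) :=
  isOpen_Ioi.uniqueDiffOn

private lemma cm_contDiffOn_rpow (p : ℝ) :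
    ContDiffOn ℝ (⊤ : ℕ∞) (fun x : ℝ => x ^ p) (Set.Ioi 0) := fun x hx =>
  (Real.contDiffAt_rpow_const_of_ne (ne_of_gt hx)).contDiffWithinAt

private lemma cm_iter_rpow (p : ℝ) (n : ℕ) :
    ∀ x ∈ Set.Ioi (0:ℝ),
      iteratedDerivWithin n (fun y : ℝ => y ^ p) (Set.Ioi 0) x
        = (∏ i ∈ Finset.range n, (p - i)) * x ^ (p - n) := by
  induction n with
  | zero => intro x hx; simp
  | succ n IH =>
    intro x hx
    rw [iteratedDerivWithin_succ,
      derivWithin_congr IH (IH x hx),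
      derivWithin_of_isOpen isOpen_Ioi hx]
    have hd : HasDerivAt (fun y : ℝ => (∏ i ∈ Finset.range n, (p - i)) * y ^ (p - n))
        ((∏ i ∈ Finset.range n, (p - i)) * ((p - n) * x ^ (p - n - 1))) x :=
      (Real.hasDerivAt_rpow_const (Or.inl (ne_of_gt (mem_Ioi.mp hx)))).const_mul _
    rw [hd.deriv, Finset.prod_range_succ]
    have : p - (n + 1 : ℕ) = p - n - 1 := by push_cast; ring
    rw [this]; ring

private lemma cm_leibniz_alg (a b : ℕ → ℝ) (n : ℕ) :
    ∑ k ∈ Finset.range (n+1), (n.choose k : ℝ) * (a (k+1) * b (n-k) + a k * b (n-k+1))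
      = ∑ k ∈ Finset.range (n+2), ((n+1).choose k : ℝ) * (a k * b (n+1-k)) := by
  rw [Finset.sum_range_succ' (fun k => ((n+1).choose k : ℝ) * (a k * b (n+1-k))) (n+1)]
  have h1 : ∀ k ∈ Finset.range (n+1),
      (((n+1).choose (k+1) : ℝ)) * (a (k+1) * b (n+1-(k+1)))
        = (n.choose k : ℝ) * (a (k+1) * b (n-k)) + (n.choose (k+1) : ℝ) * (a (k+1) * b (n-k)) := by
    intro k hk
    rw [Nat.succ_sub_succ, Nat.choose_succ_succ]
    push_cast
    ring
  rw [Finset.sum_congr rfl h1, Finset.sum_add_distrib]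
  have h2 : ∑ k ∈ Finset.range (n+1), (n.choose k : ℝ) * (a k * b (n-k+1))
      = (∑ k ∈ Finset.range (n+1), (n.choose (k+1) : ℝ) * (a (k+1) * b (n-k)))
        + (n.choose 0 : ℝ) * (a 0 * b (n+1)) := by
    rw [Finset.sum_range_succ' (fun k => (n.choose k : ℝ) * (a k * b (n-k+1))) n]
    simp only [Nat.sub_zero]
    congr 1
    rw [Finset.sum_range_succ]
    rw [Nat.choose_succ_self]
    push_cast
    rw [zero_mul, add_zero]
    apply Finset.sum_congr rfl
    intro k hk
    have hk' : k < n := Finset.mem_range.mp hk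
    have : n - (k+1) + 1 = n - k := by omega
    rw [this]
  simp only [mul_add]
  rw [Finset.sum_add_distrib, h2]
  simp only [Nat.choose_zero_right, Nat.cast_one, one_mul, Nat.sub_zero]
  ring

private lemma cm_hasDerivAt_iter (f : ℝ → ℝ) (hf : ContDiffOn ℝ (⊤ : ℕ∞) f (Set.Ioi 0))
    (k : ℕ) {x : ℝ} (hx : x ∈ Set.Ioi (0:ℝ)) :
    HasDerivAt (iteratedDerivWithin k f (Set.Ioi 0))
      (iteratedDerivWithin (k+1) f (Set.Ioi 0) x) x := by
  have hdiff : DifferentiableAt ℝ (iteratedDerivWithin k f (Set.Ioi 0)) x := by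
    have h1 : DifferentiableWithinAt ℝ (iteratedDerivWithin k f (Set.Ioi 0)) (Set.Ioi 0) x :=
      (hf.differentiableOn_iteratedDerivWithin
        (by exact_mod_cast ENat.coe_lt_top k) cm_uniqueDiffOn) x hx
    exact h1.differentiableAt (isOpen_Ioi.mem_nhds hx)
  have := hdiff.hasDerivAt
  rwa [show deriv (iteratedDerivWithin k f (Set.Ioi 0)) x
      = iteratedDerivWithin (k+1) f (Set.Ioi 0) x by
    rw [← derivWithin_of_isOpen isOpen_Ioi hx, ← iteratedDerivWithin_succ]]
    at this

private lemma cm_leibniz (f g : ℝ → ℝ) (hf : ContDiffOn ℝ (⊤ : ℕ∞) f (Set.Ioi 0))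
    (hg : ContDiffOn ℝ (⊤ : ℕ∞) g (Set.Ioi 0)) (n : ℕ) :
    ∀ x ∈ Set.Ioi (0:ℝ),
      iteratedDerivWithin n (fun y => f y * g y) (Set.Ioi 0) x
        = ∑ k ∈ Finset.range (n+1), (n.choose k : ℝ) *
            (iteratedDerivWithin k f (Set.Ioi 0) x * iteratedDerivWithin (n-k) g (Set.Ioi 0) x) := by
  induction n with
  | zero => intro x hx; simp
  | succ n IH =>
    intro x hx
    rw [iteratedDerivWithin_succ,
      derivWithin_congr IH (IH x hx),
      derivWithin_of_isOpen isOpen_Ioi hx]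
    have hd : HasDerivAt (fun y => ∑ k ∈ Finset.range (n+1), (n.choose k : ℝ) *
        (iteratedDerivWithin k f (Set.Ioi 0) y * iteratedDerivWithin (n-k) g (Set.Ioi 0) y))
        (∑ k ∈ Finset.range (n+1), (n.choose k : ℝ) *
          (iteratedDerivWithin (k+1) f (Set.Ioi 0) x * iteratedDerivWithin (n-k) g (Set.Ioi 0) x
            + iteratedDerivWithin k f (Set.Ioi 0) x *
              iteratedDerivWithin (n-k+1) g (Set.Ioi 0) x)) x := by
      apply HasDerivAt.fun_sum
      intro k hk
      exact (((cm_hasDerivAt_iter f hf k hx).mul (cm_hasDerivAt_iter g hg (n-k) hx)).const_mul _)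
    rw [hd.deriv]
    have := cm_leibniz_alg (fun k => iteratedDerivWithin k f (Set.Ioi 0) x)
      (fun k => iteratedDerivWithin k g (Set.Ioi 0) x) n
    exact this

theorem exp_neg_rpow_completely_monotone
    (s : ℝ) (hs0 : 0 < s) (hs1 : s ≤ 1) :
    ContDiffOn ℝ (⊤ : ℕ∞) (fun x : ℝ => Real.exp (-x ^ s)) (Set.Ioi 0) ∧
    ∀ (n : ℕ) (x : ℝ), 0 < x →
      0 ≤ (-1 : ℝ) ^ n *
        iteratedDerivWithin n (fun x : ℝ => Real.exp (-x ^ s)) (Set.Ioi 0) x := by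
  set f : ℝ → ℝ := fun x : ℝ => Real.exp (-x ^ s) with hf_def
  set u : ℝ → ℝ := fun y : ℝ => s * y ^ (s - 1) with hu_def
  have hfc : ContDiffOn ℝ (⊤ : ℕ∞) f (Set.Ioi 0) := ((cm_contDiffOn_rpow s).neg).exp
  have huc : ContDiffOn ℝ (⊤ : ℕ∞) u (Set.Ioi 0) := contDiffOn_const.mul (cm_contDiffOn_rpow (s - 1))
  have hu_sign : ∀ (k : ℕ) (x : ℝ), x ∈ Set.Ioi (0:ℝ) →
      0 ≤ (-1:ℝ) ^ k * iteratedDerivWithin k u (Set.Ioi 0) x := by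
    intro k x hx
    have hiter : iteratedDerivWithin k u (Set.Ioi 0) x
        = s * ((∏ i ∈ Finset.range k, (s - 1 - i)) * x ^ (s - 1 - k)) := by
      rw [hu_def]
      rw [iteratedDerivWithin_const_mul hx cm_uniqueDiffOn s (((cm_contDiffOn_rpow (s - 1)) x hx).of_le (by exact_mod_cast le_top))]
      rw [cm_iter_rpow (s - 1) k x hx]
    have hprod : (-1:ℝ) ^ k * ∏ i ∈ Finset.range k, (s - 1 - i)
        = ∏ i ∈ Finset.range k, (1 + i - s) := by
      have : ∀ i ∈ Finset.range k, (1 + (i:ℝ) - s) = (-1) * (s - 1 - i) := by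
        intro i _; ring
      rw [Finset.prod_congr rfl this, Finset.prod_mul_distrib, Finset.prod_const,
        Finset.card_range]
    have : (-1:ℝ) ^ k * iteratedDerivWithin k u (Set.Ioi 0) x
        = s * (((-1:ℝ)^k * ∏ i ∈ Finset.range k, (s - 1 - i)) * x ^ (s - 1 - k)) := by
      rw [hiter]; ring
    rw [this, hprod]
    have h1 : 0 ≤ ∏ i ∈ Finset.range k, (1 + (i:ℝ) - s) := by
      apply Finset.prod_nonneg
      intro i _
      have : (0:ℝ) ≤ i := Nat.cast_nonneg i
      linarith
    have h2 : 0 < x ^ (s - 1 - k) := Real.rpow_pos_of_pos (mem_Ioi.mp hx) _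
    positivity
  have hderiv : Set.EqOn (derivWithin f (Set.Ioi 0)) (fun y => -(u y * f y)) (Set.Ioi 0) := by
    intro x hx
    have hx0 : (0:ℝ) < x := mem_Ioi.mp hx
    have h : HasDerivAt f (Real.exp (-x ^ s) * -(s * x ^ (s - 1))) x :=
      ((Real.hasDerivAt_rpow_const (p := s) (Or.inl hx0.ne')).neg).exp
    rw [derivWithin_of_isOpen isOpen_Ioi hx, h.deriv]
    simp only [hu_def, hf_def]
    ring
  refine ⟨hfc, ?_⟩
  have key : ∀ n : ℕ, ∀ x ∈ Set.Ioi (0:ℝ),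
      0 ≤ (-1:ℝ) ^ n * iteratedDerivWithin n f (Set.Ioi 0) x := by
    intro n
    induction n using Nat.strong_induction_on with
    | _ n ih =>
      match n with
      | 0 =>
        intro x hx
        simp only [pow_zero, one_mul, iteratedDerivWithin_zero]
        exact (Real.exp_pos _).le
      | (m+1) =>
        intro x hx
        have e1 : iteratedDerivWithin (m+1) f (Set.Ioi 0) x
            = iteratedDerivWithin m (derivWithin f (Set.Ioi 0)) (Set.Ioi 0) x :=
          congrFun iteratedDerivWithin_succ' x
        have e2 : iteratedDerivWithin m (derivWithin f (Set.Ioi 0)) (Set.Ioi 0) x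
            = iteratedDerivWithin m (fun y => -(u y * f y)) (Set.Ioi 0) x :=
          iteratedDerivWithin_congr hderiv hx
        have e3 : iteratedDerivWithin m (fun y => -(u y * f y)) (Set.Ioi 0) x
            = - iteratedDerivWithin m (fun y => u y * f y) (Set.Ioi 0) x :=
          iteratedDerivWithin_fun_neg _
        have e4 := cm_leibniz u f huc hfc m x hx
        have e5 : (-1:ℝ) ^ (m+1) * iteratedDerivWithin (m+1) f (Set.Ioi 0) x
            = ∑ k ∈ Finset.range (m+1), (m.choose k : ℝ) *
                (((-1:ℝ)^k * iteratedDerivWithin k u (Set.Ioi 0) x) *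
                  ((-1:ℝ)^(m-k) * iteratedDerivWithin (m-k) f (Set.Ioi 0) x)) := by
          rw [e1, e2, e3, e4, mul_neg, ← neg_mul, Finset.mul_sum]
          apply Finset.sum_congr rfl
          intro k hk
          have hk' : k ≤ m := Nat.lt_succ_iff.mp (Finset.mem_range.mp hk)
          have hpow : (-1:ℝ)^m = (-1:ℝ)^k * (-1:ℝ)^(m-k) := by
            rw [← pow_add]
            congr 1
            omega
          have : -(-1:ℝ) ^ (m+1) = (-1:ℝ)^m := by
            rw [pow_succ]; ring
          rw [this, hpow]
          ring
        rw [e5]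
        apply Finset.sum_nonneg
        intro k hk
        have hk' : k ≤ m := Nat.lt_succ_iff.mp (Finset.mem_range.mp hk)
        have t1 : (0:ℝ) ≤ (m.choose k : ℝ) := Nat.cast_nonneg _
        have t2 := hu_sign k x hx
        have t3 := ih (m-k) (by omega) x hx
        positivity
  intro n x hx
  exact key n x (mem_Ioi.mpr hx)
end

section
/- Let d ≥ 1, let μ be a finite Borel measure on (0,∞), and define f : ℝ^d → ℝ by f(x) = ∫_0^∞ exp(-t‖x‖²) dμ(t). If f is Lebesgue integrable on ℝ^d, then for every ξ ∈ ℝ^d the Fourier transform satisfies ∫_{ℝ^d} f(x) e^{-2πi⟨x,ξ⟩} dx = ∫_0^∞ (π/t)^{d/2} exp(-π²‖ξ‖²/t) dμ(t). -/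
open MeasureTheory Real

open scoped FourierTransform RealInnerProductSpace

lemma gaussian_ft_aux (d : ℕ) (ξ : EuclideanSpace ℝ (Fin d)) {t : ℝ} (ht : 0 < t) :
    ∫ x : EuclideanSpace ℝ (Fin d),
      ((Real.exp (-t * ‖x‖ ^ 2) : ℝ) : ℂ) *
        Complex.exp (-2 * Real.pi * Complex.I * ((inner ℝ x ξ : ℝ) : ℂ))
    = ((((Real.pi / t) ^ ((d : ℝ) / 2) *
        Real.exp (-(Real.pi ^ 2 * ‖ξ‖ ^ 2) / t) : ℝ)) : ℂ) := by
  have hb : 0 < ((t : ℂ)).re := by simpa using ht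
  have h := fourier_gaussian_innerProductSpace hb ξ
  rw [Real.fourier_eq'] at h
  have h1 : ∀ x : EuclideanSpace ℝ (Fin d),
      Complex.exp ((↑(-2 * π * ⟪x, ξ⟫) * Complex.I)) • Complex.exp (-(t : ℂ) * ‖x‖ ^ 2)
      = ((Real.exp (-t * ‖x‖ ^ 2) : ℝ) : ℂ) *
        Complex.exp (-2 * Real.pi * Complex.I * ((inner ℝ x ξ : ℝ) : ℂ)) := by
    intro x
    rw [smul_eq_mul, mul_comm]
    congr 1
    · rw [Complex.ofReal_exp]; push_cast; ring_nf
    · congr 1; push_cast; ring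
  simp_rw [h1] at h
  rw [h]
  have hfr : Module.finrank ℝ (EuclideanSpace ℝ (Fin d)) = d := finrank_euclideanSpace_fin
  rw [hfr]
  have hpt : (0:ℝ) ≤ π / t := by positivity
  rw [Complex.ofReal_mul, Complex.ofReal_cpow hpt, Complex.ofReal_exp]
  push_cast
  congr 1
  congr 1
  ring

lemma ofReal_integral_helper {α} [MeasurableSpace α] {ν : Measure α} {g : α → ℝ} :
    ((∫ a, g a ∂ν : ℝ) : ℂ) = ∫ a, ((g a : ℝ) : ℂ) ∂ν := integral_ofReal.symm

theorem fourier_transform_gaussian_mixture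
    (d : ℕ) (hd : 1 ≤ d) (μ : Measure ℝ) [IsFiniteMeasure μ]
    (hμ : μ (Set.Ioi 0)ᶜ = 0)
    (f : EuclideanSpace ℝ (Fin d) → ℝ)
    (hf : ∀ x, f x = ∫ t, Real.exp (-t * ‖x‖ ^ 2) ∂μ)
    (hint : Integrable f) (ξ : EuclideanSpace ℝ (Fin d)) :
    ∫ x : EuclideanSpace ℝ (Fin d),
        (f x : ℂ) * Complex.exp (-2 * Real.pi * Complex.I * ((inner ℝ x ξ : ℝ) : ℂ))
      = ((∫ t, (Real.pi / t) ^ ((d : ℝ) / 2) *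
            Real.exp (-(Real.pi ^ 2 * ‖ξ‖ ^ 2) / t) ∂μ : ℝ) : ℂ) := by
  have hμae : ∀ᵐ t ∂μ, 0 < t := by
    have hs : {t : ℝ | ¬ 0 < t} = (Set.Ioi 0)ᶜ := by ext t; simp [Set.mem_Ioi]
    rw [ae_iff, hs]; exact hμ
  set e : EuclideanSpace ℝ (Fin d) → ℂ :=
    fun x => Complex.exp (-2 * Real.pi * Complex.I * ((inner ℝ x ξ : ℝ) : ℂ)) with he
  have he_norm : ∀ x, ‖e x‖ = 1 := by
    intro x
    simp [he, Complex.norm_exp]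
  set F : ℝ → EuclideanSpace ℝ (Fin d) → ℂ :=
    fun t x => ((Real.exp (-t * ‖x‖ ^ 2) : ℝ) : ℂ) * e x with hF
  have hcont : Continuous (fun p : EuclideanSpace ℝ (Fin d) × ℝ => F p.2 p.1) := by
    apply Continuous.mul
    · exact Complex.continuous_ofReal.comp (Real.continuous_exp.comp (by fun_prop))
    · apply Complex.continuous_exp.comp
      apply Continuous.mul continuous_const
      exact Complex.continuous_ofReal.comp (continuous_fst.inner continuous_const)
  have hnorm : ∀ t x, ‖F t x‖ = Real.exp (-t * ‖x‖ ^ 2) := by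
    intro t x
    rw [hF]; simp only [norm_mul, he_norm, mul_one, Complex.norm_real, Real.norm_eq_abs,
      abs_of_pos (Real.exp_pos _)]
  have hG : Integrable (Function.uncurry (fun (x : EuclideanSpace ℝ (Fin d)) (t : ℝ) => F t x))
      (volume.prod μ) := by
    rw [integrable_prod_iff]
    · simp only [Function.uncurry_apply_pair]
      constructor
      · refine Filter.Eventually.of_forall fun x => ?_
        apply Integrable.mono' (integrable_const (1:ℝ))
        · exact (hcont.comp (Continuous.prodMk_right x)).aestronglyMeasurable
        · filter_upwards [hμae] with t ht
          rw [hnorm]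
          exact Real.exp_le_one_iff.2 (by nlinarith [sq_nonneg ‖x‖])
      · have : (fun x : EuclideanSpace ℝ (Fin d) => ∫ t, ‖F t x‖ ∂μ) = f := by
          funext x
          simp_rw [hnorm, ← hf x]
        rw [this]; exact hint
    · exact hcont.aestronglyMeasurable
  have hLHS : ∀ x, (f x : ℂ) * e x = ∫ t, F t x ∂μ := by
    intro x
    rw [hf x, ofReal_integral_helper, ← integral_mul_const]
  calc ∫ x, (f x : ℂ) * e x = ∫ x, ∫ t, F t x ∂μ :=
        integral_congr_ae (Filter.Eventually.of_forall hLHS)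
    _ = ∫ t, (∫ x, F t x) ∂μ := integral_integral_swap hG
    _ = ∫ t, (((Real.pi / t) ^ ((d : ℝ) / 2) *
            Real.exp (-(Real.pi ^ 2 * ‖ξ‖ ^ 2) / t) : ℝ) : ℂ) ∂μ := by
        refine integral_congr_ae ?_
        filter_upwards [hμae] with t ht
        exact gaussian_ft_aux d ξ ht
    _ = _ := by rw [ofReal_integral_helper]
end
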